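/- arXiv:1602.00013 — 4 statements merged into one kernel-verified Lean document; each statement's English description precedes it below -/
import Mathlib

section
/- For x = [x_ε] in ρ-ℝ̃, the following are equivalent: (1) x is invertible in ρ-ℝ̃ and x ≥ 0; (2) for each representative (x_ε) of x one has x_ε > 0 for all ε small; (3) for each representative (x_ε) of x there exists m ∈ ℕ such that x_ε > ρ_ε^m for all ε small. -/
/-!
An invertible `x` has a moderate inverse `y`; since `x_ε y_ε → 1`, this forces
`|x_ε| ≥ c ρ_ε^a`. A negligible perturbation is `o(ρ_ε^a)`, so it can change neither this
lower bound nor the sign, and every representative of `x ≥ 0` exceeds `ρ_ε^(a+1)` for `ε` small.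

Conversely, if no power `ρ_ε^m` eventually lies below `x_ε`, choose `t_m → 0` with
`0 < x(t_m) < ρ(t_m)^m`. Setting `x` to zero on `{t_m}` is then a negligible change, and it
produces a representative that vanishes at every `t_m`. Finally, `ρ_ε^m ≤ x_ε` makes `1 / x_ε`
a moderate inverse.
-/

open Filter Topology Set Asymptotics

/-- `x` is a ρ-moderate net: `x_ε = O(ρ_ε^{-a})` as `ε → 0⁺` for some `a > 0`. -/
def RMod (ρ x : ℝ → ℝ) : Prop :=
  ∃ a : ℝ, 0 < a ∧ x =O[𝓝[>] (0:ℝ)] fun ε => ρ ε ^ (-a)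

/-- `x` is a ρ-negligible net: `x_ε = O(ρ_ε^{a})` as `ε → 0⁺` for every `a > 0`. -/
def RNegl (ρ x : ℝ → ℝ) : Prop :=
  ∀ a : ℝ, 0 < a → x =O[𝓝[>] (0:ℝ)] fun ε => ρ ε ^ a

/-- The order relation of `ρ-ℝ̃` at the level of representatives:
`x ≤ y` iff `x_ε ≤ y_ε + z_ε` for `ε` small, for some ρ-negligible net `z`. -/
def RLe (ρ x y : ℝ → ℝ) : Prop :=
  ∃ z : ℝ → ℝ, RNegl ρ z ∧ ∀ᶠ ε in 𝓝[>] (0:ℝ), x ε ≤ y ε + z ε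

/-- Invertibility in `ρ-ℝ̃` at the level of representatives. -/
def RInv (ρ x : ℝ → ℝ) : Prop :=
  ∃ y : ℝ → ℝ, RMod ρ y ∧ RNegl ρ (x * y - 1)

/-- Strict order `x < y` of `ρ-ℝ̃`: some nonnegative invertible `r` satisfies `r ≤ y - x`. -/
def RLt (ρ x y : ℝ → ℝ) : Prop :=
  ∃ r : ℝ → ℝ, RMod ρ r ∧ RInv ρ r ∧ RLe ρ 0 r ∧ RLe ρ r (y - x)

theorem Filter.exists_seq_forall_of_forall_frequently {α : Type*} {l : Filter α}
    [l.IsCountablyGenerated] {p : ℕ → α → Prop} (h : ∀ n, ∃ᶠ x in l, p n x) :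
    ∃ u : ℕ → α, Tendsto u atTop l ∧ ∀ n, p n (u n) := by
  obtain ⟨s, hs⟩ := l.exists_antitone_basis
  have : ∀ n, ∃ x ∈ s n, p n x := fun n => ((h n).and_eventually (hs.mem n)).exists.imp
    fun _ hx => ⟨hx.2, hx.1⟩
  choose u hus hup using this
  exact ⟨u, hs.tendsto hus, hup⟩

lemma RMod.indicator {ρ x : ℝ → ℝ} (hx : RMod ρ x) (s : Set ℝ) : RMod ρ (s.indicator x) :=
  let ⟨a, ha, hxa⟩ := hx
  ⟨a, ha, (isBigO_of_le _ (norm_indicator_le_norm_self x)).trans hxa⟩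

lemma RNegl.of_eventuallyEq_zero {ρ z : ℝ → ℝ} (hz : z =ᶠ[𝓝[>] (0:ℝ)] 0) : RNegl ρ z :=
  fun _ _ => hz.trans_isBigO (isBigO_zero _ _)

lemma RLe.of_rnegl_sub_right {ρ x y y' : ℝ → ℝ} (h : RLe ρ x y) (hy : RNegl ρ (y - y')) :
    RLe ρ x y' := by
  obtain ⟨z, hz, hxy⟩ := h
  refine ⟨z + (y - y'), fun a ha => (hz a ha).add (hy a ha), ?_⟩
  filter_upwards [hxy] with ε hε
  simp only [Pi.add_apply, Pi.sub_apply]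
  linarith

lemma RLe.zero_of_eventually_nonneg {ρ x : ℝ → ℝ} (hx : ∀ᶠ ε in 𝓝[>] (0:ℝ), 0 ≤ x ε) :
    RLe ρ 0 x :=
  ⟨0, .of_eventuallyEq_zero EventuallyEq.rfl, by simpa using hx⟩

lemma RNegl.tendsto_zero {ρ z : ℝ → ℝ} (hz : RNegl ρ z) (hρ0 : Tendsto ρ (𝓝[>] (0:ℝ)) (𝓝 0)) :
    Tendsto z (𝓝[>] (0:ℝ)) (𝓝 0) :=
  (hz 1 one_pos).trans_tendsto (by simpa using hρ0)

section
variable {ρ : ℝ → ℝ} (hρ : ∀ᶠ ε in 𝓝[>] (0:ℝ), ρ ε ∈ Ioo 0 1)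
include hρ

lemma eventually_rpow_le_rpow {b c : ℝ} (hbc : b ≤ c) :
    ∀ᶠ ε in 𝓝[>] (0:ℝ), ρ ε ^ c ≤ ρ ε ^ b := by
  filter_upwards [hρ] with ε hε
  exact Real.rpow_le_rpow_of_exponent_ge hε.1 hε.2.le hbc

lemma isLittleO_rpow_add_one (hρ0 : Tendsto ρ (𝓝[>] (0:ℝ)) (𝓝 0)) (b : ℝ) :
    (fun ε => ρ ε ^ (b + 1)) =o[𝓝[>] (0:ℝ)] fun ε => ρ ε ^ b := by
  have hmul : (fun ε => ρ ε * ρ ε ^ b) =o[𝓝[>] (0:ℝ)] fun ε => 1 * ρ ε ^ b :=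
    ((isLittleO_one_iff ℝ).2 hρ0).mul_isBigO (isBigO_refl _ _)
  refine hmul.congr' ?_ (.of_forall fun _ => one_mul _)
  filter_upwards [hρ] with ε hε
  rw [Real.rpow_add_one hε.1.ne', mul_comm]

lemma RNegl.isLittleO_rpow (hρ0 : Tendsto ρ (𝓝[>] (0:ℝ)) (𝓝 0)) {z : ℝ → ℝ} (hz : RNegl ρ z)
    {b : ℝ} (hb : 0 < b) : z =o[𝓝[>] (0:ℝ)] fun ε => ρ ε ^ b :=
  (hz (b + 1) (by linarith)).trans_isLittleO (isLittleO_rpow_add_one hρ hρ0 b)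

lemma RInv.exists_rpow_isBigO (hρ0 : Tendsto ρ (𝓝[>] (0:ℝ)) (𝓝 0)) {x : ℝ → ℝ}
    (hx : RInv ρ x) : ∃ a : ℝ, 0 < a ∧ (fun ε => ρ ε ^ a) =O[𝓝[>] (0:ℝ)] x := by
  obtain ⟨y, ⟨a, ha, hy⟩, hxy⟩ := hx
  have hone : (fun _ => (1:ℝ)) =O[𝓝[>] (0:ℝ)] (x * y) :=
    IsEquivalent.isBigO_symm ((isLittleO_one_iff ℝ).2 (hxy.tendsto_zero hρ0))
  have hmul := (isBigO_refl (fun ε => ρ ε ^ a) _).mul (hone.trans ((isBigO_refl x _).mul hy))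
  refine ⟨a, ha, hmul.congr' (.of_forall fun _ => mul_one _) ?_⟩
  filter_upwards [hρ] with ε hε
  rw [mul_left_comm, ← Real.rpow_add hε.1, add_neg_cancel, Real.rpow_zero, mul_one]

lemma isBigO_of_rnegl_sub (hρ0 : Tendsto ρ (𝓝[>] (0:ℝ)) (𝓝 0)) {x x' : ℝ → ℝ} {a : ℝ}
    (ha : 0 < a) (hxa : (fun ε => ρ ε ^ a) =O[𝓝[>] (0:ℝ)] x) (hxx' : RNegl ρ (x - x')) :
    (fun ε => ρ ε ^ a) =O[𝓝[>] (0:ℝ)] x' := by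
  have hsmall := (hxx'.isLittleO_rpow hρ hρ0 ha).trans_isBigO hxa
  simpa using hxa.trans hsmall.right_isBigO_sub

lemma eventually_rpow_lt_of_isBigO (hρ0 : Tendsto ρ (𝓝[>] (0:ℝ)) (𝓝 0)) {x : ℝ → ℝ} {a : ℝ}
    (ha : 0 < a) (hxa : (fun ε => ρ ε ^ a) =O[𝓝[>] (0:ℝ)] x) (hx : RLe ρ 0 x) :
    ∀ᶠ ε in 𝓝[>] (0:ℝ), ρ ε ^ (a + 1) < x ε := by
  obtain ⟨z, hz, hxz⟩ := hx
  have hzx := ((hz.isLittleO_rpow hρ hρ0 ha).trans_isBigO hxa).def (c := 1 / 2) (by norm_num)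
  have hρx := ((isLittleO_rpow_add_one hρ hρ0 a).trans_isBigO hxa).def (c := 1 / 2)
    (by norm_num)
  filter_upwards [hzx, hρx, hxz, hρ] with ε hzε hρε hxε hε
  have hpos : 0 < ρ ε ^ (a + 1) := Real.rpow_pos_of_pos hε.1 _
  rw [Real.norm_eq_abs, Real.norm_eq_abs] at hzε hρε
  rw [abs_of_pos hpos] at hρε
  rw [Pi.zero_apply] at hxε
  cases abs_cases (x ε) <;> cases abs_le.mp hzε <;> linarith

theorem exists_pow_lt_of_rinv (hρ0 : Tendsto ρ (𝓝[>] (0:ℝ)) (𝓝 0)) {x x' : ℝ → ℝ}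
    (hinv : RInv ρ x) (hnonneg : RLe ρ 0 x) (hxx' : RNegl ρ (x - x')) :
    ∃ m : ℕ, ∀ᶠ ε in 𝓝[>] (0:ℝ), ρ ε ^ m < x' ε := by
  obtain ⟨a, ha, hxa⟩ := hinv.exists_rpow_isBigO hρ hρ0
  have hlt := eventually_rpow_lt_of_isBigO hρ hρ0 ha (isBigO_of_rnegl_sub hρ hρ0 ha hxa hxx')
    (hnonneg.of_rnegl_sub_right hxx')
  refine ⟨⌈a + 1⌉₊, ?_⟩
  filter_upwards [hlt, eventually_rpow_le_rpow hρ (Nat.le_ceil (a + 1))] with ε hlt hle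
  rw [Real.rpow_natCast] at hle
  exact hle.trans_lt hlt

lemma RNegl.indicator_range {x : ℝ → ℝ} {t : ℕ → ℝ} (ht : ∀ n, t n ≠ 0)
    (hxt : ∀ n, |x (t n)| ≤ ρ (t n) ^ n) : RNegl ρ ((range t).indicator x) := by
  intro a ha
  refine .of_bound 1 ?_
  have hfar : ∀ᶠ ε in 𝓝[>] (0:ℝ), ε ∉ t '' Iic ⌈a⌉₊ := by
    refine nhdsWithin_le_nhds (((finite_Iic _).image t).isClosed.compl_mem_nhds ?_)
    rintro ⟨n, -, hn⟩
    exact ht n hn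
  filter_upwards [hfar, hρ] with ε hfar hε
  by_cases hrange : ε ∈ range t
  · obtain ⟨n, rfl⟩ := hrange
    have hn : a ≤ n := (Nat.le_ceil a).trans (by
      exact_mod_cast (lt_of_not_ge fun hn => hfar (mem_image_of_mem t hn)).le)
    rw [indicator_of_mem (mem_range_self n), one_mul, Real.norm_eq_abs, Real.norm_eq_abs,
      abs_of_pos (Real.rpow_pos_of_pos hε.1 _)]
    refine (hxt n).trans ?_
    rw [← Real.rpow_natCast]
    exact Real.rpow_le_rpow_of_exponent_ge hε.1 hε.2.le hn
  · rw [indicator_of_notMem hrange, norm_zero]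
    positivity

theorem exists_pow_le_of_forall_eventually_pos {x : ℝ → ℝ} (hx : RMod ρ x)
    (hpos : ∀ x' : ℝ → ℝ, RMod ρ x' → RNegl ρ (x - x') → ∀ᶠ ε in 𝓝[>] (0:ℝ), 0 < x' ε) :
    ∃ m : ℕ, ∀ᶠ ε in 𝓝[>] (0:ℝ), ρ ε ^ m ≤ x ε := by
  by_contra! hsmall
  have hx0 := hpos x hx (.of_eventuallyEq_zero (by simp))
  obtain ⟨t, ht, htx⟩ := exists_seq_forall_of_forall_frequently fun m =>
    (hsmall m).and_eventually (hx0.and self_mem_nhdsWithin)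
  have hxx' : x - (range t)ᶜ.indicator x = (range t).indicator x := by
    rw [indicator_compl, sub_sub_cancel]
  have hnegl : RNegl ρ ((range t).indicator x) := RNegl.indicator_range hρ
    (fun n => (htx n).2.2.ne') fun n => (abs_of_pos (htx n).2.1).trans_le (htx n).1.le
  obtain ⟨n, hn⟩ := (ht.eventually (hpos _ (hx.indicator _) (hxx' ▸ hnegl))).exists
  simp [indicator_of_notMem] at hn

lemma rinv_of_eventually_pow_le {x : ℝ → ℝ} {m : ℕ}
    (hxm : ∀ᶠ ε in 𝓝[>] (0:ℝ), ρ ε ^ m ≤ x ε) : RInv ρ x := by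
  refine ⟨x⁻¹, ⟨m + 1, by positivity, .of_bound 1 ?_⟩, .of_eventuallyEq_zero ?_⟩
  · filter_upwards [hxm, hρ, eventually_rpow_le_rpow hρ (show -((m:ℝ) + 1) ≤ -m by linarith)]
      with ε hxε hε hle
    have hρm : 0 < ρ ε ^ m := pow_pos hε.1 m
    rw [Pi.inv_apply, norm_inv, Real.norm_eq_abs, Real.norm_eq_abs, one_mul,
      abs_of_pos (hρm.trans_le hxε), abs_of_pos (Real.rpow_pos_of_pos hε.1 _)]
    calc (x ε)⁻¹ ≤ (ρ ε ^ m)⁻¹ := inv_anti₀ hρm hxε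
      _ = ρ ε ^ (-(m:ℝ)) := by rw [Real.rpow_neg hε.1.le, Real.rpow_natCast]
      _ ≤ ρ ε ^ (-((m:ℝ) + 1)) := hle
  · filter_upwards [hxm, hρ] with ε hxε hε
    simp [((pow_pos hε.1 m).trans_le hxε).ne']

theorem rinv_and_rle_zero_of_forall_eventually_pos {x : ℝ → ℝ} (hx : RMod ρ x)
    (hpos : ∀ x' : ℝ → ℝ, RMod ρ x' → RNegl ρ (x - x') → ∀ᶠ ε in 𝓝[>] (0:ℝ), 0 < x' ε) :
    RInv ρ x ∧ RLe ρ 0 x := by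
  obtain ⟨m, hm⟩ := exists_pow_le_of_forall_eventually_pos hρ hx hpos
  refine ⟨rinv_of_eventually_pow_le hρ hm, .zero_of_eventually_nonneg ?_⟩
  filter_upwards [hm, hρ] with ε hmε hε
  exact (pow_pos hε.1 m).le.trans hmε

end

/-- For `x = [x_ε] ∈ ρ-ℝ̃` the following are equivalent:
(1) `x` is invertible and `x ≥ 0` (i.e. `x > 0`);
(2) every representative of `x` is eventually (for `ε` small) strictly positive;
(3) for every representative `(x'_ε)` of `x` there is `m ∈ ℕ` with `x'_ε > ρ_ε^m`
for `ε` small. -/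
theorem invertible_nonneg_tfae (ρ : ℝ → ℝ)
    (hρpos : ∀ ε ∈ Set.Ioc (0:ℝ) 1, 0 < ρ ε)
    (hρ0 : Tendsto ρ (𝓝[>] (0:ℝ)) (𝓝 0))
    (x : ℝ → ℝ) (hx : RMod ρ x) :
    ((RInv ρ x ∧ RLe ρ 0 x) ↔
      (∀ x' : ℝ → ℝ, RMod ρ x' → RNegl ρ (x - x') →
        ∀ᶠ ε in 𝓝[>] (0:ℝ), 0 < x' ε)) ∧
    ((RInv ρ x ∧ RLe ρ 0 x) ↔
      (∀ x' : ℝ → ℝ, RMod ρ x' → RNegl ρ (x - x') →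
        ∃ m : ℕ, ∀ᶠ ε in 𝓝[>] (0:ℝ), ρ ε ^ m < x' ε)) := by
  have hρ : ∀ᶠ ε in 𝓝[>] (0:ℝ), ρ ε ∈ Ioo 0 1 := by
    filter_upwards [Ioo_mem_nhdsGT (zero_lt_one' ℝ), hρ0.eventually_lt_const one_pos]
      with ε hε hlt
    exact ⟨hρpos ε (Ioo_subset_Ioc_self hε), hlt⟩
  have h32 (x' : ℝ → ℝ) (h : ∃ m : ℕ, ∀ᶠ ε in 𝓝[>] (0:ℝ), ρ ε ^ m < x' ε) :
      ∀ᶠ ε in 𝓝[>] (0:ℝ), 0 < x' ε := by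
    obtain ⟨m, hm⟩ := h
    filter_upwards [hm, hρ] with ε hmε hε
    exact (pow_pos hε.1 m).trans hmε
  have h13 (h : RInv ρ x ∧ RLe ρ 0 x) (x' : ℝ → ℝ) (_ : RMod ρ x') (hxx' : RNegl ρ (x - x')) :=
    exists_pow_lt_of_rinv hρ hρ0 h.1 h.2 hxx'
  have h21 := rinv_and_rle_zero_of_forall_eventually_pos hρ hx
  exact ⟨⟨fun h x' hx' hxx' => h32 x' (h13 h x' hx' hxx'), h21⟩,
    h13, fun h => h21 fun x' hx' hxx' => h32 x' (h x' hx' hxx')⟩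
end

section
/- The family of balls B_r(c) := { x ∈ ρ-ℝ̃^n : |x − c| < r }, where c ranges over ρ-ℝ̃^n and r over all invertible positive elements of ρ-ℝ̃, forms a basis for a topology on ρ-ℝ̃^n (the sharp topology). Here a < b means that b − a is positive and invertible. -/
open Filter Topology Set Asymptotics

/-- A ρ-moderate net of points of `ℝ^n`. -/
def VMod (n : ℕ) (ρ : ℝ → ℝ) (x : ℝ → EuclideanSpace ℝ (Fin n)) : Prop :=
  ∃ a : ℝ, 0 < a ∧ (fun ε => ‖x ε‖) =O[𝓝[>] (0:ℝ)] fun ε => ρ ε ^ (-a)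

/-- A ρ-negligible net of points of `ℝ^n`. -/
def VNegl (n : ℕ) (ρ : ℝ → ℝ) (x : ℝ → EuclideanSpace ℝ (Fin n)) : Prop :=
  ∀ a : ℝ, 0 < a → (fun ε => ‖x ε‖) =O[𝓝[>] (0:ℝ)] fun ε => ρ ε ^ a

/-- `[x_ε] ∈ [A_ε]`: membership in the internal set generated by `(A_ε)`, i.e. some
representative of the class of `x` belongs to `A_ε` for `ε` small. -/
def IntMem (n : ℕ) (ρ : ℝ → ℝ) (x : ℝ → EuclideanSpace ℝ (Fin n))
    (A : ℝ → Set (EuclideanSpace ℝ (Fin n))) : Prop :=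
  ∃ x' : ℝ → EuclideanSpace ℝ (Fin n),
    VNegl n ρ (fun ε => x ε - x' ε) ∧ ∀ᶠ ε in 𝓝[>] (0:ℝ), x' ε ∈ A ε

/-- `(x_ε)` strongly belongs to `(A_ε)`, i.e. `[x_ε] ∈ ⟨A_ε⟩`: every representative of the
class of `x` belongs to `A_ε` for `ε` small. -/
def SBel (n : ℕ) (ρ : ℝ → ℝ) (x : ℝ → EuclideanSpace ℝ (Fin n))
    (A : ℝ → Set (EuclideanSpace ℝ (Fin n))) : Prop :=
  ∀ x' : ℝ → EuclideanSpace ℝ (Fin n),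
    VNegl n ρ (fun ε => x ε - x' ε) → ∀ᶠ ε in 𝓝[>] (0:ℝ), x' ε ∈ A ε

/-- The ball `B_r(c) = { x ∈ ρ-ℝ̃^n : |x - c| < r }`, described at the level of
(ρ-moderate) representatives; `|x - c|` is the class of `(‖x_ε - c_ε‖)`. -/
def SharpBall (n : ℕ) (ρ : ℝ → ℝ) (c : ℝ → EuclideanSpace ℝ (Fin n)) (r : ℝ → ℝ) :
    Set {x : ℝ → EuclideanSpace ℝ (Fin n) // VMod n ρ x} :=
  {x | RLt ρ (fun ε => ‖x.1 ε - c ε‖) r}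

/-- The family of all balls `B_r(c)` with `c ∈ ρ-ℝ̃^n` and `r` positive and invertible. -/
def SharpBalls (n : ℕ) (ρ : ℝ → ℝ) :
    Set (Set {x : ℝ → EuclideanSpace ℝ (Fin n) // VMod n ρ x}) :=
  {B | ∃ c : ℝ → EuclideanSpace ℝ (Fin n), ∃ r : ℝ → ℝ,
    VMod n ρ c ∧ RMod ρ r ∧ RLe ρ 0 r ∧ RInv ρ r ∧ B = SharpBall n ρ c r}

/-! Everything reduces to the powers `ρ^K` of the scale: a net `r` with `0 ≤ r` that is
invertible in `ρ-ℝ̃` is eventually bounded below by some `ρ^m`, so that `f < g` holds exactly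
when `f + ρ^K ≤ g` for `ε` small, for some `K`. Hence each point `x` of a ball `B_r(c)` has a
gap `ρ^K` to its boundary, and by the triangle inequality the ball `B_{ρ^{K'}}(x)` lies in
`B_r(c)` as soon as `2 ρ^{K'} ≤ ρ^K`, i.e. for every `K' > K`. Around a point of `B₁ ∩ B₂`
the ball of radius `ρ^{K'}` with `K'` beyond both gaps does the job. -/

section RobinsonColombeau

variable {ρ : ℝ → ℝ}

lemma eventually_mul_rpow_le_rpow (hρ : Tendsto ρ (𝓝[>] 0) (𝓝[>] 0)) {b c : ℝ} (hbc : b < c)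
    (C : ℝ) : ∀ᶠ ε in 𝓝[>] (0:ℝ), C * ρ ε ^ c ≤ ρ ε ^ b := by
  have hcb : 0 < c - b := sub_pos.2 hbc
  have hlim : Tendsto (fun ε => C * ρ ε ^ (c - b)) (𝓝[>] 0) (𝓝 0) := by
    simpa [Real.zero_rpow hcb.ne'] using
      ((Real.continuousAt_rpow_const 0 _ (Or.inr hcb.le)).tendsto.comp
        (hρ.mono_right nhdsWithin_le_nhds)).const_mul C
  filter_upwards [hlim.eventually_le_const zero_lt_one, hρ.eventually eventually_mem_nhdsWithin]
    with ε hsmall hpos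
  calc C * ρ ε ^ c = C * ρ ε ^ (c - b) * ρ ε ^ b := by
        rw [mul_assoc, ← Real.rpow_add hpos, sub_add_cancel]
    _ ≤ 1 * ρ ε ^ b := by gcongr; exact (Real.rpow_pos_of_pos hpos b).le
    _ = ρ ε ^ b := one_mul _

lemma Asymptotics.IsBigO.eventually_abs_le_rpow (hρ : Tendsto ρ (𝓝[>] 0) (𝓝[>] 0))
    {w : ℝ → ℝ} {a b : ℝ} (hw : w =O[𝓝[>] (0:ℝ)] fun ε => ρ ε ^ a) (hba : b < a) :
    ∀ᶠ ε in 𝓝[>] (0:ℝ), |w ε| ≤ ρ ε ^ b := by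
  obtain ⟨C, hC⟩ := hw.bound
  filter_upwards [hC, eventually_mul_rpow_le_rpow hρ hba C,
    hρ.eventually eventually_mem_nhdsWithin] with ε hbound hle hpos
  rw [Real.norm_eq_abs, Real.norm_eq_abs, abs_of_pos (Real.rpow_pos_of_pos hpos a)] at hbound
  exact hbound.trans hle

lemma RNegl.eventually_abs_le_rpow (hρ : Tendsto ρ (𝓝[>] 0) (𝓝[>] 0)) {w : ℝ → ℝ}
    (hw : RNegl ρ w) (b : ℝ) : ∀ᶠ ε in 𝓝[>] (0:ℝ), |w ε| ≤ ρ ε ^ b :=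
  (hw (|b| + 1) (by positivity)).eventually_abs_le_rpow hρ (by linarith [le_abs_self b])

lemma RMod.exists_eventually_abs_le_rpow (hρ : Tendsto ρ (𝓝[>] 0) (𝓝[>] 0)) {w : ℝ → ℝ}
    (hw : RMod ρ w) : ∃ b : ℝ, ∀ᶠ ε in 𝓝[>] (0:ℝ), |w ε| ≤ ρ ε ^ b := by
  obtain ⟨a, -, hO⟩ := hw
  exact ⟨-a - 1, hO.eventually_abs_le_rpow hρ (by linarith)⟩

lemma rnegl_of_eventuallyEq_zero {w : ℝ → ℝ} (hw : w =ᶠ[𝓝[>] (0:ℝ)] 0) : RNegl ρ w :=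
  fun _ _ => (isBigO_zero _ _).congr' hw.symm EventuallyEq.rfl

lemma rle_of_eventually_le {x y : ℝ → ℝ} (h : ∀ᶠ ε in 𝓝[>] (0:ℝ), x ε ≤ y ε) : RLe ρ x y :=
  ⟨0, rnegl_of_eventuallyEq_zero EventuallyEq.rfl, by simpa using h⟩

lemma rmod_rpow (hρ : Tendsto ρ (𝓝[>] 0) (𝓝[>] 0)) (K : ℝ) :
    RMod ρ fun ε => ρ ε ^ K := by
  refine ⟨|K| + 1, by positivity, IsBigO.of_bound 1 ?_⟩
  filter_upwards [eventually_mul_rpow_le_rpow hρ (by linarith [neg_abs_le K] : -(|K| + 1) < K) 1,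
    hρ.eventually eventually_mem_nhdsWithin] with ε hle hpos
  rw [Real.norm_eq_abs, Real.norm_eq_abs, abs_of_pos (Real.rpow_pos_of_pos hpos _),
    abs_of_pos (Real.rpow_pos_of_pos hpos _)]
  linarith

lemma rinv_rpow (hρ : Tendsto ρ (𝓝[>] 0) (𝓝[>] 0)) (K : ℝ) :
    RInv ρ fun ε => ρ ε ^ K := by
  refine ⟨fun ε => ρ ε ^ (-K), rmod_rpow hρ (-K), rnegl_of_eventuallyEq_zero ?_⟩
  filter_upwards [hρ.eventually eventually_mem_nhdsWithin] with ε hpos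
  simp [Real.rpow_neg hpos.le, (Real.rpow_pos_of_pos hpos K).ne']

lemma RInv.exists_eventually_rpow_le (hρ : Tendsto ρ (𝓝[>] 0) (𝓝[>] 0)) {r : ℝ → ℝ}
    (hinv : RInv ρ r) (hnonneg : RLe ρ 0 r) :
    ∃ m : ℝ, ∀ᶠ ε in 𝓝[>] (0:ℝ), ρ ε ^ m ≤ r ε := by
  obtain ⟨y, hy, hry⟩ := hinv
  obtain ⟨b, hyb⟩ := hy.exists_eventually_abs_le_rpow hρ
  obtain ⟨z, hz, hrz⟩ := hnonneg
  refine ⟨1 - b, ?_⟩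
  filter_upwards [hyb, hry.eventually_abs_le_rpow hρ 1, hz.eventually_abs_le_rpow hρ (2 - b), hrz,
    eventually_mul_rpow_le_rpow hρ (by norm_num : (0:ℝ) < 1) 2,
    eventually_mul_rpow_le_rpow hρ (by linarith : 1 - b < 2 - b) 2,
    hρ.eventually eventually_mem_nhdsWithin] with ε hyε hryε hzε hrzε hρ_half hgap hpos
  simp only [Pi.sub_apply, Pi.mul_apply, Pi.one_apply, Pi.zero_apply, Real.rpow_one,
    Real.rpow_zero] at hryε hrzε hρ_half
  have hsplit : ρ ε ^ (1 - b) * ρ ε ^ b = ρ ε := by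
    rw [← Real.rpow_add hpos, sub_add_cancel, Real.rpow_one]
  -- `r y` is within `ρ ≤ 1/2` of `1`, so `|r| ρ^b ≥ |r y| ≥ ρ`.
  have habs : ρ ε ^ (1 - b) ≤ |r ε| := by
    have hρb := Real.rpow_pos_of_pos hpos b
    have hry_ge : ρ ε ≤ |r ε| * ρ ε ^ b := by
      calc ρ ε ≤ r ε * y ε := by linarith [(abs_le.1 hryε).1]
        _ ≤ |r ε| * |y ε| := (le_abs_self _).trans (abs_mul _ _).le
        _ ≤ |r ε| * ρ ε ^ b := by gcongr
    exact le_of_mul_le_mul_right (by rwa [hsplit]) hρb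
  -- `r` cannot be negative: `-r ≤ z ≤ ρ^(2-b) < ρ^(1-b) ≤ |r|`.
  have hz_small := (abs_le.1 hzε).2
  rcases abs_cases (r ε) with ⟨hr, -⟩ | ⟨hr, -⟩ <;> linarith

lemma rlt_iff_exists_eventually_add_rpow_le (hρ : Tendsto ρ (𝓝[>] 0) (𝓝[>] 0))
    {f g : ℝ → ℝ} : RLt ρ f g ↔ ∃ K : ℝ, ∀ᶠ ε in 𝓝[>] (0:ℝ), f ε + ρ ε ^ K ≤ g ε := by
  constructor
  · rintro ⟨r, -, hinv, hnonneg, z, hz, hrz⟩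
    obtain ⟨m, hm⟩ := hinv.exists_eventually_rpow_le hρ hnonneg
    refine ⟨m + 1, ?_⟩
    filter_upwards [hm, hrz, hz.eventually_abs_le_rpow hρ (m + 1),
      eventually_mul_rpow_le_rpow hρ (by linarith : m < m + 1) 2] with ε hmε hrzε hzε hgap
    simp only [Pi.sub_apply] at hrzε
    linarith [(abs_le.1 hzε).2]
  · rintro ⟨K, hK⟩
    refine ⟨fun ε => ρ ε ^ K, rmod_rpow hρ K, rinv_rpow hρ K, ?_, rle_of_eventually_le ?_⟩
    · exact rle_of_eventually_le <| by
        filter_upwards [hρ.eventually eventually_mem_nhdsWithin] with ε hpos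
        exact (Real.rpow_pos_of_pos hpos K).le
    · filter_upwards [hK] with ε hKε
      simp only [Pi.sub_apply]
      linarith

end RobinsonColombeau

section SharpBalls

variable {n : ℕ} {ρ : ℝ → ℝ}

lemma sharpBall_rpow_mem_sharpBalls (hρ : Tendsto ρ (𝓝[>] 0) (𝓝[>] 0))
    {c : ℝ → EuclideanSpace ℝ (Fin n)} (hc : VMod n ρ c) (K : ℝ) :
    SharpBall n ρ c (fun ε => ρ ε ^ K) ∈ SharpBalls n ρ := by
  refine ⟨c, fun ε => ρ ε ^ K, hc, rmod_rpow hρ K, rle_of_eventually_le ?_, rinv_rpow hρ K, rfl⟩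
  filter_upwards [hρ.eventually eventually_mem_nhdsWithin] with ε hpos
  exact (Real.rpow_pos_of_pos hpos K).le

lemma mem_sharpBall_rpow_self (hρ : Tendsto ρ (𝓝[>] 0) (𝓝[>] 0))
    (x : {x : ℝ → EuclideanSpace ℝ (Fin n) // VMod n ρ x}) (K : ℝ) :
    x ∈ SharpBall n ρ x.1 (fun ε => ρ ε ^ K) := by
  refine (rlt_iff_exists_eventually_add_rpow_le hρ).2 ⟨K + 1, ?_⟩
  filter_upwards [eventually_mul_rpow_le_rpow hρ (by linarith : K < K + 1) 1] with ε hε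
  simpa using hε

lemma exists_sharpBall_rpow_subset (hρ : Tendsto ρ (𝓝[>] 0) (𝓝[>] 0))
    {c : ℝ → EuclideanSpace ℝ (Fin n)} {r : ℝ → ℝ}
    {x : {x : ℝ → EuclideanSpace ℝ (Fin n) // VMod n ρ x}} (hx : x ∈ SharpBall n ρ c r) :
    ∃ K : ℝ, ∀ K', K < K' → SharpBall n ρ x.1 (fun ε => ρ ε ^ K') ⊆ SharpBall n ρ c r := by
  obtain ⟨K, hK⟩ := (rlt_iff_exists_eventually_add_rpow_le hρ).1 hx
  refine ⟨K, fun K' hKK' y hy => (rlt_iff_exists_eventually_add_rpow_le hρ).2 ⟨K', ?_⟩⟩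
  obtain ⟨L, hL⟩ := (rlt_iff_exists_eventually_add_rpow_le hρ).1 hy
  filter_upwards [hK, hL, eventually_mul_rpow_le_rpow hρ hKK' 2,
    hρ.eventually eventually_mem_nhdsWithin] with ε hKε hLε hgap hpos
  linarith [norm_sub_le_norm_sub_add_norm_sub (y.1 ε) (x.1 ε) (c ε),
    Real.rpow_pos_of_pos hpos L]

end SharpBalls

/-- The balls `B_r(c)`, `c ∈ ρ-ℝ̃^n`, `r ∈ ρ-ℝ̃` positive invertible,
form a basis for a topology (the sharp topology) on `ρ-ℝ̃^n`: they cover everything, and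
around every point of an intersection of two balls there is a ball contained in it. -/
theorem sharp_balls_form_basis (n : ℕ) (ρ : ℝ → ℝ)
    (hρpos : ∀ ε ∈ Set.Ioc (0:ℝ) 1, 0 < ρ ε)
    (hρ0 : Tendsto ρ (𝓝[>] (0:ℝ)) (𝓝 0)) :
    (∀ x : {x : ℝ → EuclideanSpace ℝ (Fin n) // VMod n ρ x},
      ∃ B ∈ SharpBalls n ρ, x ∈ B) ∧
    (∀ B₁ ∈ SharpBalls n ρ, ∀ B₂ ∈ SharpBalls n ρ,
      ∀ x ∈ B₁ ∩ B₂, ∃ B₃ ∈ SharpBalls n ρ, x ∈ B₃ ∧ B₃ ⊆ B₁ ∩ B₂) := by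
  have hρ : Tendsto ρ (𝓝[>] 0) (𝓝[>] 0) := tendsto_nhdsWithin_iff.2 ⟨hρ0, by
    filter_upwards [Ioc_mem_nhdsGT (zero_lt_one' ℝ)] using hρpos⟩
  refine ⟨fun x => ⟨_, sharpBall_rpow_mem_sharpBalls hρ x.2 0, mem_sharpBall_rpow_self hρ x 0⟩,
    ?_⟩
  rintro B₁ ⟨c₁, r₁, -, -, -, -, rfl⟩ B₂ ⟨c₂, r₂, -, -, -, -, rfl⟩ x ⟨hx₁, hx₂⟩
  obtain ⟨K₁, hK₁⟩ := exists_sharpBall_rpow_subset hρ hx₁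
  obtain ⟨K₂, hK₂⟩ := exists_sharpBall_rpow_subset hρ hx₂
  refine ⟨_, sharpBall_rpow_mem_sharpBalls hρ x.2 (max K₁ K₂ + 1),
    mem_sharpBall_rpow_self hρ x _, subset_inter (hK₁ _ ?_) (hK₂ _ ?_)⟩
  · linarith [le_max_left K₁ K₂]
  · linarith [le_max_right K₁ K₂]
end

section
/- Let (A_ε) be a net of subsets of ℝ^n and (x_ε) a ρ-moderate net of points of ℝ^n. Then [x_ε] ∈ [A_ε] (membership in the internal set) if and only if for all q ∈ ℝ_{>0}, d(x_ε, A_ε) ≤ ρ_ε^q for ε small; equivalently, [x_ε] ∈ [A_ε] if and only if [d(x_ε, A_ε)] = 0 in ρ-ℝ̃. -/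
/-!
If `x_ε - x'_ε` is negligible and `x'_ε ∈ A_ε`, then `d(x_ε, A_ε) ≤ |x_ε - x'_ε| ≤ ρ_ε^q`
eventually, since a `O(ρ_ε^{2q})` net is `o(ρ_ε^q)`. Conversely, if the distance is
negligible, pick `x'_ε ∈ A_ε` with `|x_ε - x'_ε| < d(x_ε, A_ε) + ρ_ε^{1/ε}`; the error
`ρ_ε^{1/ε}` is itself negligible because `1/ε → ∞`, so `x_ε - x'_ε` is negligible.
-/

open Filter Topology Set Asymptotics

open Metric

section RpowNet

variable {α : Type*} {l : Filter α} {ρ : α → ℝ}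

theorem rpow_isLittleO_rpow_of_lt (hρpos : ∀ᶠ ε in l, 0 < ρ ε) (hρ : Tendsto ρ l (𝓝 0))
    {a b : ℝ} (hab : a < b) : (fun ε => ρ ε ^ b) =o[l] fun ε => ρ ε ^ a := by
  have hsmall : Tendsto (fun ε => ρ ε ^ (b - a)) l (𝓝 0) := by
    simpa [Real.zero_rpow (sub_pos.2 hab).ne'] using
      hρ.rpow_const (Or.inr (sub_pos.2 hab).le)
  have hsplit : (fun ε => ρ ε ^ a * ρ ε ^ (b - a)) =ᶠ[l] fun ε => ρ ε ^ b := by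
    filter_upwards [hρpos] with ε hε
    rw [← Real.rpow_add hε, add_sub_cancel]
  simpa using ((isBigO_refl (fun ε => ρ ε ^ a) l).mul_isLittleO
    (isLittleO_one_iff ℝ |>.2 hsmall)).congr' hsplit (by simp)

theorem Asymptotics.IsBigO.eventually_norm_le_rpow {E : Type*} [Norm E] {f : α → E}
    (hρpos : ∀ᶠ ε in l, 0 < ρ ε) (hρ : Tendsto ρ l (𝓝 0)) {q : ℝ} (hq : 0 < q)
    (hf : f =O[l] fun ε => ρ ε ^ (2 * q)) : ∀ᶠ ε in l, ‖f ε‖ ≤ ρ ε ^ q := by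
  filter_upwards [(hf.trans_isLittleO (rpow_isLittleO_rpow_of_lt hρpos hρ (by linarith))).bound
    one_pos, hρpos] with ε hε hρε
  simpa [abs_of_pos (Real.rpow_pos_of_pos hρε q)] using hε

theorem eventually_rpow_le_rpow_of_tendsto_atTop (hρpos : ∀ᶠ ε in l, 0 < ρ ε)
    (hρ : Tendsto ρ l (𝓝 0)) {t : α → ℝ} (ht : Tendsto t l atTop) (a : ℝ) :
    ∀ᶠ ε in l, ρ ε ^ t ε ≤ ρ ε ^ a := by
  filter_upwards [hρpos, hρ.eventually_le_const one_pos, ht.eventually_ge_atTop a]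
    with ε hpos hle hat
  exact Real.rpow_le_rpow_of_exponent_ge hpos hle hat

end RpowNet

theorem exists_eventually_mem_edist_lt {α E : Type*} [PseudoEMetricSpace E] {l : Filter α}
    {x : α → E} {A : α → Set E} {δ : α → ENNReal} (h : ∀ᶠ ε in l, infEDist (x ε) (A ε) < δ ε) :
    ∃ x' : α → E, ∀ᶠ ε in l, x' ε ∈ A ε ∧ edist (x ε) (x' ε) < δ ε := by
  have hchoice : ∀ ε, ∃ y, infEDist (x ε) (A ε) < δ ε → y ∈ A ε ∧ edist (x ε) y < δ ε := by
    intro ε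
    by_cases hε : infEDist (x ε) (A ε) < δ ε
    · obtain ⟨y, hy, hyδ⟩ := infEDist_lt_iff.1 hε
      exact ⟨y, fun _ => ⟨hy, hyδ⟩⟩
    · exact ⟨x ε, fun h' => absurd h' hε⟩
  choose x' hx' using hchoice
  exact ⟨x', h.mono hx'⟩

section InternalSet

variable {n : ℕ} {ρ : ℝ → ℝ} {A : ℝ → Set (EuclideanSpace ℝ (Fin n))}
  {x : ℝ → EuclideanSpace ℝ (Fin n)}

theorem IntMem.eventually_infEDist_le_rpow (hρpos : ∀ᶠ ε in 𝓝[>] (0:ℝ), 0 < ρ ε)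
    (hρ : Tendsto ρ (𝓝[>] (0:ℝ)) (𝓝 0)) (hmem : IntMem n ρ x A) {q : ℝ} (hq : 0 < q) :
    ∀ᶠ ε in 𝓝[>] (0:ℝ), infEDist (x ε) (A ε) ≤ ENNReal.ofReal (ρ ε ^ q) := by
  obtain ⟨x', hneg, hx'⟩ := hmem
  filter_upwards [(hneg (2 * q) (by positivity)).eventually_norm_le_rpow hρpos hρ hq, hx']
    with ε hle hε
  calc infEDist (x ε) (A ε) ≤ edist (x ε) (x' ε) := infEDist_le_edist_of_mem hε
    _ ≤ ENNReal.ofReal (ρ ε ^ q) := by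
      rw [edist_le_ofReal ((norm_nonneg _).trans hle), dist_eq_norm]
      simpa using hle

theorem intMem_of_eventually_infEDist_le_rpow (hρpos : ∀ᶠ ε in 𝓝[>] (0:ℝ), 0 < ρ ε)
    (hρ : Tendsto ρ (𝓝[>] (0:ℝ)) (𝓝 0))
    (H : ∀ q : ℝ, 0 < q → ∀ᶠ ε in 𝓝[>] (0:ℝ),
      infEDist (x ε) (A ε) ≤ ENNReal.ofReal (ρ ε ^ q)) :
    IntMem n ρ x A := by
  obtain ⟨x', hx'⟩ := exists_eventually_mem_edist_lt
    (δ := fun ε => infEDist (x ε) (A ε) + ENNReal.ofReal (ρ ε ^ ε⁻¹)) <| by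
      filter_upwards [H 1 one_pos, hρpos] with ε hfin hε
      exact ENNReal.lt_add_right (hfin.trans_lt ENNReal.ofReal_lt_top).ne
        (ENNReal.ofReal_pos.2 (Real.rpow_pos_of_pos hε _)).ne'
  refine ⟨x', fun a ha => IsBigO.of_bound 2 ?_, hx'.mono fun _ h => h.1⟩
  filter_upwards [hx', H a ha, hρpos,
    eventually_rpow_le_rpow_of_tendsto_atTop hρpos hρ tendsto_inv_nhdsGT_zero a]
    with ε ⟨_, hlt⟩ hd hε hinv
  have hρa : 0 ≤ ρ ε ^ a := (Real.rpow_pos_of_pos hε a).le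
  have hedist : edist (x ε) (x' ε) ≤ ENNReal.ofReal (ρ ε ^ a + ρ ε ^ a) := by
    rw [ENNReal.ofReal_add hρa hρa]
    exact hlt.le.trans (add_le_add hd (ENNReal.ofReal_le_ofReal hinv))
  rw [edist_le_ofReal (by positivity), dist_eq_norm] at hedist
  rw [norm_norm, Real.norm_of_nonneg hρa]
  linarith

end InternalSet

theorem internal_mem_iff_dist_general (n : ℕ) (ρ : ℝ → ℝ)
    (hρpos : ∀ ε ∈ Set.Ioc (0:ℝ) 1, 0 < ρ ε)
    (hρ0 : Tendsto ρ (𝓝[>] (0:ℝ)) (𝓝 0))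
    (A : ℝ → Set (EuclideanSpace ℝ (Fin n)))
    (x : ℝ → EuclideanSpace ℝ (Fin n)) :
    IntMem n ρ x A ↔
      ∀ q : ℝ, 0 < q → ∀ᶠ ε in 𝓝[>] (0:ℝ),
        EMetric.infEdist (x ε) (A ε) ≤ ENNReal.ofReal (ρ ε ^ q) := by
  have hρ : ∀ᶠ ε in 𝓝[>] (0:ℝ), 0 < ρ ε := eventually_of_mem (Ioc_mem_nhdsGT one_pos) hρpos
  exact ⟨fun hmem _ hq => hmem.eventually_infEDist_le_rpow hρ hρ0 hq,
    intMem_of_eventually_infEDist_le_rpow hρ hρ0⟩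

/-- For a net `(A_ε)` of subsets of `ℝ^n` and a ρ-moderate net `(x_ε)`,
`[x_ε] ∈ [A_ε]` iff for all `q > 0`, `d(x_ε, A_ε) ≤ ρ_ε^q` for `ε` small (the distance to
the empty set being `+∞`); i.e. iff the generalized distance `[d(x_ε, A_ε)]` is `0`. -/
theorem internal_mem_iff_dist (n : ℕ) (ρ : ℝ → ℝ)
    (hρpos : ∀ ε ∈ Set.Ioc (0:ℝ) 1, 0 < ρ ε)
    (hρ0 : Tendsto ρ (𝓝[>] (0:ℝ)) (𝓝 0))
    (A : ℝ → Set (EuclideanSpace ℝ (Fin n)))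
    (x : ℝ → EuclideanSpace ℝ (Fin n)) (hx : VMod n ρ x) :
    IntMem n ρ x A ↔
      ∀ q : ℝ, 0 < q → ∀ᶠ ε in 𝓝[>] (0:ℝ),
        EMetric.infEdist (x ε) (A ε) ≤ ENNReal.ofReal (ρ ε ^ q) :=
  internal_mem_iff_dist_general n ρ hρpos hρ0 A x
end

section
/- For any net (A_ε) of subsets of ℝ^n, the internal set satisfies [A_ε] = [cl(A_ε)], where cl denotes Euclidean closure; and the strongly internal set satisfies ⟨A_ε⟩ = ⟨int(A_ε)⟩, where int denotes Euclidean interior. -/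
open Filter Topology Set Asymptotics

/-!
Perturbing a representative by `ρ_ε ^ (1/ε)` does not change its class, since this radius is
`ρ`-negligible; yet it is a positive radius for each fixed `ε`. A point of `cl(A_ε)` can thus be
moved into `A_ε`, and a point outside `int(A_ε)` can be moved out of `A_ε`, without changing the
class. The second statement is the first for the complements, via `int A = (cl Aᶜ)ᶜ`.
-/

lemma Metric.exists_forall_dist_lt_mem_of_mem_closure {ι X : Type*} [PseudoMetricSpace X]
    (x : ι → X) (r : ι → ℝ) (A : ι → Set X) :
    ∃ y : ι → X, ∀ i, 0 < r i → dist (x i) (y i) < r i ∧ (x i ∈ closure (A i) → y i ∈ A i) := by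
  classical
  refine ⟨fun i => if h : ∃ z ∈ A i, dist (x i) z < r i then h.choose else x i, fun i hr => ?_⟩
  dsimp only
  split_ifs with h
  · exact ⟨h.choose_spec.2, fun _ => h.choose_spec.1⟩
  · exact ⟨by rwa [dist_self], fun hx => absurd (Metric.mem_closure_iff.mp hx _ hr) h⟩

lemma eventually_mem_Ioo_zero_one {ρ : ℝ → ℝ} (hρpos : ∀ ε ∈ Set.Ioc (0:ℝ) 1, 0 < ρ ε)
    (hρ0 : Tendsto ρ (𝓝[>] (0:ℝ)) (𝓝 0)) : ∀ᶠ ε in 𝓝[>] (0:ℝ), ρ ε ∈ Ioo 0 1 := by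
  filter_upwards [Ioc_mem_nhdsGT (zero_lt_one' ℝ), hρ0.eventually (gt_mem_nhds one_pos)]
    with ε hε hρ1 using ⟨hρpos ε hε, hρ1⟩

lemma rNegl_rpow_one_div {ρ : ℝ → ℝ} (hρ : ∀ᶠ ε in 𝓝[>] (0:ℝ), ρ ε ∈ Ioo 0 1) :
    RNegl ρ fun ε => ρ ε ^ (1 / ε) := by
  intro a ha
  refine IsBigO.of_bound 1 ?_
  filter_upwards [hρ, Ioo_mem_nhdsGT (one_div_pos.mpr ha)] with ε ⟨hρ0, hρ1⟩ ⟨hε0, hεa⟩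
  have ha_le : a ≤ 1 / ε := by rw [le_div_iff₀ hε0]; rw [lt_div_iff₀ ha] at hεa; linarith
  rw [one_mul, Real.norm_of_nonneg (by positivity), Real.norm_of_nonneg (by positivity)]
  exact Real.rpow_le_rpow_of_exponent_ge hρ0 hρ1.le ha_le

lemma vNegl_of_eventually_norm_le {n : ℕ} {ρ r : ℝ → ℝ} {δ : ℝ → EuclideanSpace ℝ (Fin n)}
    (hr : RNegl ρ r) (hδ : ∀ᶠ ε in 𝓝[>] (0:ℝ), ‖δ ε‖ ≤ r ε) : VNegl n ρ δ := fun a ha =>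
  (IsBigO.of_bound 1 <| hδ.mono fun ε h => by
    simpa only [one_mul, norm_norm] using h.trans (Real.le_norm_self _)).trans (hr a ha)

lemma vNegl_sub_trans {n : ℕ} {ρ : ℝ → ℝ} {x y z : ℝ → EuclideanSpace ℝ (Fin n)}
    (hxy : VNegl n ρ fun ε => x ε - y ε) (hyz : VNegl n ρ fun ε => y ε - z ε) :
    VNegl n ρ fun ε => x ε - z ε := by
  intro a ha
  refine (isBigO_of_le _ fun ε => ?_).trans ((hxy a ha).add (hyz a ha))
  simp only [Real.norm_eq_abs, abs_norm]
  exact (norm_sub_le_norm_sub_add_norm_sub _ (y ε) _).trans (le_abs_self _)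

lemma exists_vNegl_sub_eventually_mem_of_mem_closure {n : ℕ} {ρ : ℝ → ℝ}
    (hρ : ∀ᶠ ε in 𝓝[>] (0:ℝ), ρ ε ∈ Ioo 0 1) (x : ℝ → EuclideanSpace ℝ (Fin n))
    (A : ℝ → Set (EuclideanSpace ℝ (Fin n))) :
    ∃ y : ℝ → EuclideanSpace ℝ (Fin n), (VNegl n ρ fun ε => x ε - y ε) ∧
      ∀ᶠ ε in 𝓝[>] (0:ℝ), x ε ∈ closure (A ε) → y ε ∈ A ε := by
  obtain ⟨y, hy⟩ := Metric.exists_forall_dist_lt_mem_of_mem_closure x (fun ε => ρ ε ^ (1 / ε)) A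
  have hy' : ∀ᶠ ε in 𝓝[>] (0:ℝ), dist (x ε) (y ε) < ρ ε ^ (1 / ε) ∧
      (x ε ∈ closure (A ε) → y ε ∈ A ε) :=
    hρ.mono fun ε hρε => hy ε (Real.rpow_pos_of_pos hρε.1 _)
  refine ⟨y, vNegl_of_eventually_norm_le (rNegl_rpow_one_div hρ) ?_, hy'.mono fun _ h => h.2⟩
  exact hy'.mono fun ε h => (dist_eq_norm (x ε) (y ε) ▸ h.1).le

section
variable {n : ℕ} {ρ : ℝ → ℝ} {x : ℝ → EuclideanSpace ℝ (Fin n)}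
  {A B : ℝ → Set (EuclideanSpace ℝ (Fin n))}

lemma IntMem.mono (hx : IntMem n ρ x A) (hAB : ∀ ε, A ε ⊆ B ε) : IntMem n ρ x B :=
  let ⟨y, hxy, hy⟩ := hx
  ⟨y, hxy, hy.mono fun ε h => hAB ε h⟩

lemma SBel.mono (hx : SBel n ρ x A) (hAB : ∀ ε, A ε ⊆ B ε) : SBel n ρ x B :=
  fun y hxy => (hx y hxy).mono fun ε h => hAB ε h

lemma IntMem.of_closure (hρ : ∀ᶠ ε in 𝓝[>] (0:ℝ), ρ ε ∈ Ioo 0 1)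
    (hx : IntMem n ρ x fun ε => closure (A ε)) : IntMem n ρ x A := by
  obtain ⟨y, hxy, hy⟩ := hx
  obtain ⟨z, hyz, hz⟩ := exists_vNegl_sub_eventually_mem_of_mem_closure hρ y A
  exact ⟨z, vNegl_sub_trans hxy hyz, (hy.and hz).mono fun ε h => h.2 h.1⟩

lemma SBel.interior (hρ : ∀ᶠ ε in 𝓝[>] (0:ℝ), ρ ε ∈ Ioo 0 1) (hx : SBel n ρ x A) :
    SBel n ρ x fun ε => interior (A ε) := by
  intro y hxy
  obtain ⟨z, hyz, hz⟩ := exists_vNegl_sub_eventually_mem_of_mem_closure hρ y fun ε => (A ε)ᶜ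
  filter_upwards [hx z (vNegl_sub_trans hxy hyz), hz] with ε hzA hz_of_mem
  rw [interior_eq_compl_closure_compl]
  exact fun hy => hz_of_mem hy hzA

end

/-- For any net `(A_ε)` of subsets of `ℝ^n`: `[A_ε] = [cl(A_ε)]` and
`⟨A_ε⟩ = ⟨int(A_ε)⟩` (as sets of points of `ρ-ℝ̃^n`). -/
theorem internal_closure_strongly_internal_interior (n : ℕ) (ρ : ℝ → ℝ)
    (hρpos : ∀ ε ∈ Set.Ioc (0:ℝ) 1, 0 < ρ ε)
    (hρ0 : Tendsto ρ (𝓝[>] (0:ℝ)) (𝓝 0))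
    (A : ℝ → Set (EuclideanSpace ℝ (Fin n))) :
    (∀ x : ℝ → EuclideanSpace ℝ (Fin n), VMod n ρ x →
      (IntMem n ρ x A ↔ IntMem n ρ x (fun ε => closure (A ε)))) ∧
    (∀ x : ℝ → EuclideanSpace ℝ (Fin n), VMod n ρ x →
      (SBel n ρ x A ↔ SBel n ρ x (fun ε => interior (A ε)))) := by
  have hρ := eventually_mem_Ioo_zero_one hρpos hρ0
  exact ⟨fun _ _ => ⟨fun hx => hx.mono fun _ => subset_closure, IntMem.of_closure hρ⟩,
    fun _ _ => ⟨SBel.interior hρ, fun hx => hx.mono fun _ => interior_subset⟩⟩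
end
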